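/- arXiv:1301.3127 — 2 statements merged into one kernel-verified Lean document; each statement's English description precedes it below -/
import Mathlib

section
/- Let G be an adaptive simulation graph for a timed automaton A. Then A has an accepting run if and only if some node of G labeled (q, Z, L, U) with q ∈ Acc and Z ≠ ∅ is reachable from the initial node of G by edges of G. -/
/-! Common framework: clocks, valuations, guards, zones, timed automata,
LU-bounds and LU-abstraction, following the paper's definitions. -/

abbrev Val (X : Type*) := X → NNReal

/-- Time delay: `v + δ`. -/
def delay {X : Type*} (v : Val X) (δ : NNReal) : Val X := fun x => v x + δ

open Classical in
/-- Reset `[R]v`. -/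
noncomputable def resetV {X : Type*} (R : Set X) (v : Val X) : Val X :=
  fun x => if x ∈ R then 0 else v x

/-- The valuation `0̄`. -/
def zeroVal (X : Type*) : Val X := fun _ => 0

/-- Comparison operators for atomic clock constraints. -/
inductive Cmp where
  | lt | le | eq | ge | gt

/-- Satisfaction of `a # c`. -/
def Cmp.sat : Cmp → NNReal → ℕ → Prop
  | .lt, a, c => a < (c : NNReal)
  | .le, a, c => a ≤ (c : NNReal)
  | .eq, a, c => a = (c : NNReal)
  | .ge, a, c => (c : NNReal) ≤ a
  | .gt, a, c => (c : NNReal) < a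

/-- An atomic clock constraint `x # c`. -/
structure Atomic (X : Type*) where
  clock : X
  cmp : Cmp
  bound : ℕ

/-- A guard is a finite conjunction of atomic constraints. -/
abbrev Guard (X : Type*) := List (Atomic X)

/-- `v ⊨ g`. -/
def satG {X : Type*} (v : Val X) (g : Guard X) : Prop :=
  ∀ a ∈ g, a.cmp.sat (v a.clock) a.bound

/-- Lower-bound constraints: `x > c` or `x ≥ c`. -/
def Atomic.isLower {X : Type*} (a : Atomic X) : Prop := a.cmp = Cmp.gt ∨ a.cmp = Cmp.ge

/-- Upper-bound constraints: `x < c` or `x ≤ c`. -/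
def Atomic.isUpper {X : Type*} (a : Atomic X) : Prop := a.cmp = Cmp.lt ∨ a.cmp = Cmp.le

/-- A set `W` of valuations is time-elapsed. -/
def TimeElapsed {X : Type*} (W : Set (Val X)) : Prop :=
  ∀ v ∈ W, ∀ δ : NNReal, delay v δ ∈ W

/-- `Post_{g,R}(W) = { [R]v + δ | v ∈ W, v ⊨ g, δ ∈ ℝ≥0 }`. -/
def post {X : Type*} (g : Guard X) (R : Set X) (W : Set (Val X)) : Set (Val X) :=
  { w | ∃ v ∈ W, satG v g ∧ ∃ δ : NNReal, w = delay (resetV R v) δ }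

/-- LU-bounds take values in `ℕ ∪ {−∞}`. -/
abbrev Bnd := WithBot ℕ

/-- `b < r` where `b ∈ ℕ ∪ {−∞}` and `r ∈ ℝ≥0` (every real is greater than `−∞`). -/
def Bnd.ltVal (b : Bnd) (r : NNReal) : Prop :=
  ∀ n : ℕ, b = (n : Bnd) → (n : NNReal) < r

/-- The LU-preorder `v ⊑_LU v'`. -/
def luLe {X : Type*} (L U : X → Bnd) (v v' : Val X) : Prop :=
  ∀ x, (v' x < v x → Bnd.ltVal (L x) (v' x)) ∧ (v x < v' x → Bnd.ltVal (U x) (v x))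

/-- `a_LU(W)`. -/
def aLU {X : Type*} (L U : X → Bnd) (W : Set (Val X)) : Set (Val X) :=
  { v | ∃ v' ∈ W, luLe L U v v' }

/-- A timed automaton `(Q, q0, X, T, Acc)` (finiteness of `Q`, `X`, `trans`
is imposed as hypotheses of the theorems). -/
structure TA (Q X : Type*) where
  q0 : Q
  trans : Set (Q × Guard X × Set X × Q)
  acc : Set Q

/-- One delay or action transition between configurations. -/
def step {Q X : Type*} (A : TA Q X) (c c' : Q × Val X) : Prop :=
  (c'.1 = c.1 ∧ ∃ δ : NNReal, c'.2 = delay c.2 δ) ∨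
  (∃ g R, (c.1, g, R, c'.1) ∈ A.trans ∧ satG c.2 g ∧ c'.2 = resetV R c.2)

/-- There is a run (finite alternating sequence of delay and action transitions)
from `c` to `c'`. -/
def Reach {Q X : Type*} (A : TA Q X) : (Q × Val X) → (Q × Val X) → Prop :=
  Relation.ReflTransGen (step A)

/-- Symbolic transition `(q,W) ⇒^t (q', Post_t(W))`, union over all `t ∈ T`. -/
def symbStep {Q X : Type*} (A : TA Q X) (p p' : Q × Set (Val X)) : Prop :=
  ∃ g R, (p.1, g, R, p'.1) ∈ A.trans ∧ p'.2 = post g R p.2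

/-- The initial zone `Z0 = { 0̄ + δ | δ ∈ ℝ≥0 }`. -/
def Z0 (X : Type*) : Set (Val X) := { v | ∃ δ : NNReal, v = delay (zeroVal X) δ }

/-- Time-abstract simulation for `A`. -/
def IsTASim {Q X : Type*} (A : TA Q X) (S : (Q × Val X) → (Q × Val X) → Prop) : Prop :=
  (∀ c c', S c c' → c.1 = c'.1) ∧
  (∀ (q : Q) (v v' : Val X) (δ : NNReal) (g : Guard X) (R : Set X) (q1 : Q),
    S (q, v) (q, v') → (q, g, R, q1) ∈ A.trans → satG (delay v δ) g →
    ∃ δ' : NNReal, satG (delay v' δ') g ∧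
      S (q1, resetV R (delay v δ)) (q1, resetV R (delay v' δ')))

/-- Abstraction induced by a preorder `≼` on valuations. -/
def aAbs {X : Type*} (pre : Val X → Val X → Prop) (W : Set (Val X)) : Set (Val X) :=
  { v | ∃ v' ∈ W, pre v v' }

/-- Abstract transition `(q,W) ⇒_a (q', a(W'))` whenever `W = a(W)` and `(q,W) ⇒ (q',W')`. -/
def absStep {Q X : Type*} (A : TA Q X) (pre : Val X → Val X → Prop)
    (p p' : Q × Set (Val X)) : Prop :=
  p.2 = aAbs pre p.2 ∧ ∃ W', symbStep A p (p'.1, W') ∧ p'.2 = aAbs pre W'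

/-- An adaptive simulation graph (ASG) for the timed automaton `A`. -/
structure ASG {Q X : Type*} (A : TA Q X) where
  Node : Type
  st : Node → Q
  zone : Node → Set (Val X)
  Lb : Node → X → Bnd
  Ub : Node → X → Bnd
  init : Node
  tent : Node → Prop
  edge : Node → Node → Prop
  /-- the covering node associated to a tentative node -/
  cov : Node → Node
  /-- every node is reachable from the initial node by edges -/
  reach : ∀ n, Relation.ReflTransGen edge init n
  /-- G1 -/
  g1_st : st init = A.q0
  g1_zone : zone init = Z0 X
  /-- G2: every non-tentative node has all its symbolic successors -/
  g2 : ∀ n, ¬ tent n → ∀ g R q', (st n, g, R, q') ∈ A.trans →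
        post g R (zone n) ≠ ∅ →
        ∃ n', edge n n' ∧ st n' = q' ∧ zone n' = post g R (zone n)
  /-- G2: every edge of the graph arises in this way -/
  g2' : ∀ n n', edge n n' → ¬ tent n ∧
        ∃ g R, (st n, g, R, st n') ∈ A.trans ∧ zone n' = post g R (zone n) ∧
               post g R (zone n) ≠ ∅
  /-- G3 -/
  g3 : ∀ n, tent n → ¬ tent (cov n) ∧ st (cov n) = st n ∧
        zone n ⊆ aLU (Lb (cov n)) (Ub (cov n)) (zone (cov n))
  /-- I1 -/
  i1 : ∀ n g R q', (st n, g, R, q') ∈ A.trans → post g R (zone n) = ∅ →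
        post g R (aLU (Lb n) (Ub n) (zone n)) = ∅
  /-- I2 -/
  i2 : ∀ n n', edge n n' → ∀ g R, (st n, g, R, st n') ∈ A.trans →
        zone n' = post g R (zone n) →
        post g R (aLU (Lb n) (Ub n) (zone n)) ⊆ aLU (Lb n') (Ub n') (zone n')
  /-- I3 -/
  i3 : ∀ n, tent n → ∀ x, Lb (cov n) x ≤ Lb n x ∧ Ub (cov n) x ≤ Ub n x

/-! Soundness: the zones of an ASG are exact `Post`-images along its edges, starting from `Z0`,
so each of their valuations is reached by a run of `A`.

Completeness: every reachable configuration `(q, v)` is `⊑_LU`-below some valuation in the zone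
of a non-tentative node with state `q`, for that node's bounds. Delays preserve this because
zones are time-elapsed and `⊑_LU` is compatible with delays; an action `t` leads into
`Post_t(a_LU(Z))`, which is empty by (I1) when `Post_t(Z)` is, and otherwise lies in the
abstraction of the successor given by (G2), by (I2). A tentative node is replaced by its covering
node using (G3), (I3) (smaller bounds give a coarser preorder) and transitivity of `⊑_LU`. -/

lemma delay_zero {X : Type*} (v : Val X) : delay v 0 = v := by
  funext x; simp [delay]

lemma delay_delay {X : Type*} (v : Val X) (δ δ' : NNReal) :
    delay (delay v δ) δ' = delay v (δ + δ') := by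
  funext x; simp [delay, add_assoc]

namespace Bnd

lemma ltVal_of_le {b b' : Bnd} {r : NNReal} (h : b' ≤ b) (hb : b.ltVal r) : b'.ltVal r := by
  rintro n rfl
  obtain ⟨m, rfl, hnm⟩ := WithBot.coe_le_iff.mp h
  exact lt_of_le_of_lt (by exact_mod_cast hnm) (hb m rfl)

lemma ltVal.trans_le {b : Bnd} {r r' : NNReal} (hb : b.ltVal r) (h : r ≤ r') : b.ltVal r' :=
  fun n hn => (hb n hn).trans_le h

end Bnd

section LUPreorder

variable {X : Type*} {L U : X → Bnd}

lemma luLe_refl (L U : X → Bnd) (v : Val X) : luLe L U v v :=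
  fun _ => ⟨fun h => absurd h (lt_irrefl _), fun h => absurd h (lt_irrefl _)⟩

lemma luLe_trans {u v w : Val X} (huv : luLe L U u v) (hvw : luLe L U v w) : luLe L U u w := by
  intro x
  constructor
  · intro hwu
    rcases lt_or_ge (w x) (v x) with hwv | hvw'
    · exact (hvw x).1 hwv
    · exact ((huv x).1 (hvw'.trans_lt hwu)).trans_le hvw'
  · intro huw
    rcases lt_or_ge (u x) (v x) with huv' | hvu
    · exact (huv x).2 huv'
    · exact ((hvw x).2 (hvu.trans_lt huw)).trans_le hvu

lemma luLe.of_bounds_le {L' U' : X → Bnd} {v w : Val X}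
    (hL : ∀ x, L' x ≤ L x) (hU : ∀ x, U' x ≤ U x) (h : luLe L U v w) : luLe L' U' v w :=
  fun x => ⟨fun hlt => Bnd.ltVal_of_le (hL x) ((h x).1 hlt),
    fun hlt => Bnd.ltVal_of_le (hU x) ((h x).2 hlt)⟩

lemma luLe.delay {v w : Val X} (h : luLe L U v w) (δ : NNReal) :
    luLe L U (delay v δ) (delay w δ) := by
  intro x
  simp only [_root_.delay, add_lt_add_iff_right]
  exact ⟨fun hlt => ((h x).1 hlt).trans_le le_self_add,
    fun hlt => ((h x).2 hlt).trans_le le_self_add⟩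

lemma TimeElapsed.delay_mem_aLU {W : Set (Val X)} (hW : TimeElapsed W) {v : Val X}
    (hv : v ∈ aLU L U W) (δ : NNReal) : delay v δ ∈ aLU L U W := by
  obtain ⟨w, hw, hvw⟩ := hv
  exact ⟨delay w δ, hW w hw δ, hvw.delay δ⟩

end LUPreorder

lemma timeElapsed_Z0 (X : Type*) : TimeElapsed (Z0 X) := by
  rintro v ⟨δ, rfl⟩ δ'
  exact ⟨δ + δ', delay_delay _ _ _⟩

lemma timeElapsed_post {X : Type*} (g : Guard X) (R : Set X) (W : Set (Val X)) :
    TimeElapsed (post g R W) := by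
  rintro v ⟨u, hu, hg, δ, rfl⟩ δ'
  exact ⟨u, hu, hg, δ + δ', delay_delay _ _ _⟩

lemma resetV_mem_post {X : Type*} {g : Guard X} {R : Set X} {W : Set (Val X)} {v : Val X}
    (hv : v ∈ W) (hg : satG v g) : resetV R v ∈ post g R W :=
  ⟨v, hv, hg, 0, (delay_zero _).symm⟩

lemma Reach.delay {Q X : Type*} {A : TA Q X} {c : Q × Val X} {q : Q} {v : Val X}
    (h : Reach A c (q, v)) (δ : NNReal) : Reach A c (q, delay v δ) :=
  h.tail (Or.inl ⟨rfl, δ, rfl⟩)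

lemma exists_reach_of_mem_post {Q X : Type*} {A : TA Q X} {q q' : Q} {g : Guard X} {R : Set X}
    (ht : (q, g, R, q') ∈ A.trans) {W : Set (Val X)} {w : Val X} (hw : w ∈ post g R W) :
    ∃ v ∈ W, Reach A (q, v) (q', w) := by
  obtain ⟨v, hv, hg, δ, rfl⟩ := hw
  exact ⟨v, hv, Reach.delay (Relation.ReflTransGen.single (Or.inr ⟨g, R, ht, hg, rfl⟩)) δ⟩

namespace ASG

variable {Q X : Type*} {A : TA Q X} (G : ASG A)

lemma timeElapsed_zone (n : G.Node) : TimeElapsed (G.zone n) := by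
  rcases (G.reach n).cases_tail with rfl | ⟨m, -, hmn⟩
  · rw [G.g1_zone]; exact timeElapsed_Z0 X
  · obtain ⟨-, g, R, -, hz, -⟩ := G.g2' m n hmn
    rw [hz]; exact timeElapsed_post g R _

lemma reach_of_mem_zone (n : G.Node) {v : Val X} (hv : v ∈ G.zone n) :
    Reach A (A.q0, zeroVal X) (G.st n, v) := by
  induction G.reach n generalizing v with
  | refl =>
    rw [G.g1_zone] at hv
    obtain ⟨δ, rfl⟩ := hv
    rw [G.g1_st]
    exact Reach.delay Relation.ReflTransGen.refl δ
  | @tail m n' _ hmn ih =>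
    obtain ⟨-, g, R, ht, hz, -⟩ := G.g2' m n' hmn
    rw [hz] at hv
    obtain ⟨u, hu, hrun⟩ := exists_reach_of_mem_post ht hv
    exact (ih hu).trans hrun

def Covered (c : Q × Val X) : Prop :=
  ∃ n : G.Node, ¬ G.tent n ∧ G.st n = c.1 ∧ c.2 ∈ aLU (G.Lb n) (G.Ub n) (G.zone n)

lemma covered_of_mem_aLU (n : G.Node) {v : Val X} (hv : v ∈ aLU (G.Lb n) (G.Ub n) (G.zone n)) :
    G.Covered (G.st n, v) := by
  by_cases ht : G.tent n
  · obtain ⟨hnt, hst, hsub⟩ := G.g3 n ht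
    obtain ⟨w, hw, hvw⟩ := hv
    obtain ⟨w', hw', hww'⟩ := hsub hw
    have hvw' := hvw.of_bounds_le (fun x => (G.i3 n ht x).1) (fun x => (G.i3 n ht x).2)
    exact ⟨G.cov n, hnt, hst, w', hw', luLe_trans hvw' hww'⟩
  · exact ⟨n, ht, rfl, hv⟩

lemma covered_init : G.Covered (A.q0, zeroVal X) := by
  have h0 : zeroVal X ∈ G.zone G.init := by
    rw [G.g1_zone]; exact ⟨0, (delay_zero _).symm⟩
  simpa only [G.g1_st] using G.covered_of_mem_aLU G.init ⟨_, h0, luLe_refl _ _ _⟩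

lemma Covered.step {G : ASG A} {c c' : Q × Val X} (hc : G.Covered c) (hs : step A c c') :
    G.Covered c' := by
  obtain ⟨n, hnt, hst, hv⟩ := hc
  obtain ⟨q', v'⟩ := c'
  rcases hs with ⟨rfl, δ, rfl⟩ | ⟨g, R, ht, hg, rfl⟩
  · rw [← hst]
    exact G.covered_of_mem_aLU n ((G.timeElapsed_zone n).delay_mem_aLU hv δ)
  · rw [← hst] at ht
    have hmem : resetV R c.2 ∈ post g R (aLU (G.Lb n) (G.Ub n) (G.zone n)) :=
      resetV_mem_post hv hg
    by_cases hpost : post g R (G.zone n) = ∅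
    · rw [G.i1 n g R q' ht hpost] at hmem
      exact absurd hmem (Set.notMem_empty _)
    · obtain ⟨n', hedge, rfl, hz⟩ := G.g2 n hnt g R _ ht hpost
      exact G.covered_of_mem_aLU n' (G.i2 n n' hedge g R ht hz hmem)

lemma covered_of_reach {c : Q × Val X} (h : Reach A (A.q0, zeroVal X) c) : G.Covered c := by
  induction h with
  | refl => exact G.covered_init
  | tail _ hs ih => exact ih.step hs

end ASG

theorem stmt_2_general {Q X : Type*} (A : TA Q X)
    (G : ASG A) :
    (∃ (q : Q) (v : Val X), Reach A (A.q0, zeroVal X) (q, v) ∧ q ∈ A.acc) ↔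
    (∃ n : G.Node, Relation.ReflTransGen G.edge G.init n ∧
      G.st n ∈ A.acc ∧ G.zone n ≠ (∅ : Set (Val X))) := by
  constructor
  · rintro ⟨q, v, hreach, hacc⟩
    obtain ⟨n, -, rfl, w, hw, -⟩ := G.covered_of_reach hreach
    exact ⟨n, G.reach n, hacc, Set.nonempty_iff_ne_empty.mp ⟨w, hw⟩⟩
  · rintro ⟨n, -, hacc, hne⟩
    obtain ⟨v, hv⟩ := Set.nonempty_iff_ne_empty.mpr hne
    exact ⟨G.st n, v, G.reach_of_mem_zone n hv, hacc⟩

/-- `A` has an accepting run iff some node of the ASG with an accepting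
state and nonempty zone is reachable from the initial node by edges. -/
theorem stmt_2 {Q X : Type*} [Finite Q] [Finite X] (A : TA Q X) (hT : A.trans.Finite)
    (G : ASG A) :
    (∃ (q : Q) (v : Val X), Reach A (A.q0, zeroVal X) (q, v) ∧ q ∈ A.acc) ↔
    (∃ n : G.Node, Relation.ReflTransGen G.edge G.init n ∧
      G.st n ∈ A.acc ∧ G.zone n ≠ (∅ : Set (Val X))) :=
  stmt_2_general A G
end

section
/- Let L₁, U₁ and L₂, U₂ be LU-bound functions with L₂(x) ≤ L₁(x) and U₂(x) ≤ U₁(x) for every clock x, and let W, W₁, W₂ be sets of valuations. If W ⊆ a_{L₁U₁}(W₁) and W₁ ⊆ a_{L₂U₂}(W₂), then W ⊆ a_{L₂U₂}(W₂). Equivalently at the level of valuations: if v ⊑_{L₁U₁} v₁ and v₁ ⊑_{L₂U₂} v₂, then v ⊑_{L₂U₂} v₂. -/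
namespace Bnd

theorem ltVal.of_le_bound {b b' : Bnd} {r : NNReal} (h : b.ltVal r) (hb : b' ≤ b) :
    b'.ltVal r := by
  rintro n rfl
  obtain ⟨m, rfl, hnm⟩ := WithBot.coe_le_iff.mp hb
  exact (Nat.cast_le.mpr hnm).trans_lt (h m rfl)

theorem ltVal.of_le_val {b : Bnd} {r r' : NNReal} (h : b.ltVal r) (hr : r ≤ r') :
    b.ltVal r' :=
  fun n hn => (h n hn).trans_le hr

end Bnd

section LUBounds

variable {X : Type*} {L₁ U₁ L₂ U₂ : X → Bnd}

/-- Clock by clock, compare with `v₁ x`: either the second step alone supplies the bound, or the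
first one does, and lowering `L₁, U₁` to `L₂, U₂` keeps it. -/
theorem luLe_trans_of_bounds_le (hL : ∀ x, L₂ x ≤ L₁ x) (hU : ∀ x, U₂ x ≤ U₁ x)
    {v v₁ v₂ : Val X} (h₁ : luLe L₁ U₁ v v₁) (h₂ : luLe L₂ U₂ v₁ v₂) : luLe L₂ U₂ v v₂ := by
  intro x
  obtain ⟨hL₁, hU₁⟩ := h₁ x
  obtain ⟨hL₂, hU₂⟩ := h₂ x
  constructor
  · intro hv₂v
    rcases lt_or_ge (v₂ x) (v₁ x) with hv₂v₁ | hv₁v₂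
    · exact hL₂ hv₂v₁
    · exact ((hL₁ (hv₁v₂.trans_lt hv₂v)).of_le_bound (hL x)).of_le_val hv₁v₂
  · intro hvv₂
    rcases lt_or_ge (v x) (v₁ x) with hvv₁ | hv₁v
    · exact (hU₁ hvv₁).of_le_bound (hU x)
    · exact (hU₂ (hv₁v.trans_lt hvv₂)).of_le_val hv₁v

theorem subset_aLU_trans_of_bounds_le (hL : ∀ x, L₂ x ≤ L₁ x) (hU : ∀ x, U₂ x ≤ U₁ x)
    {W W₁ W₂ : Set (Val X)} (h₁ : W ⊆ aLU L₁ U₁ W₁) (h₂ : W₁ ⊆ aLU L₂ U₂ W₂) :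
    W ⊆ aLU L₂ U₂ W₂ := by
  intro v hv
  obtain ⟨v₁, hv₁, hvv₁⟩ := h₁ hv
  obtain ⟨v₂, hv₂, hv₁v₂⟩ := h₂ hv₁
  exact ⟨v₂, hv₂, luLe_trans_of_bounds_le hL hU hvv₁ hv₁v₂⟩

end LUBounds

theorem stmt_13_general {X : Type*} (L₁ U₁ L₂ U₂ : X → Bnd)
    (hL : ∀ x, L₂ x ≤ L₁ x) (hU : ∀ x, U₂ x ≤ U₁ x) :
    (∀ W W₁ W₂ : Set (Val X),
      W ⊆ aLU L₁ U₁ W₁ → W₁ ⊆ aLU L₂ U₂ W₂ → W ⊆ aLU L₂ U₂ W₂) ∧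
    (∀ v v₁ v₂ : Val X, luLe L₁ U₁ v v₁ → luLe L₂ U₂ v₁ v₂ → luLe L₂ U₂ v v₂) :=
  ⟨fun _ _ _ => subset_aLU_trans_of_bounds_le hL hU,
    fun _ _ _ => luLe_trans_of_bounds_le hL hU⟩

/-- mixed transitivity of LU-abstractions for decreasing bounds. -/
theorem stmt_13 {X : Type*} [Finite X] (L₁ U₁ L₂ U₂ : X → Bnd)
    (hL : ∀ x, L₂ x ≤ L₁ x) (hU : ∀ x, U₂ x ≤ U₁ x) :
    (∀ W W₁ W₂ : Set (Val X),
      W ⊆ aLU L₁ U₁ W₁ → W₁ ⊆ aLU L₂ U₂ W₂ → W ⊆ aLU L₂ U₂ W₂) ∧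
    (∀ v v₁ v₂ : Val X, luLe L₁ U₁ v v₁ → luLe L₂ U₂ v₁ v₂ → luLe L₂ U₂ v v₂) :=
  stmt_13_general L₁ U₁ L₂ U₂ hL hU
end
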